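/- arXiv:1805.10937 — 5 statements merged into one kernel-verified Lean document; each statement's English description precedes it below -/
import Mathlib

section
/- Let p be a prime and a_p a totally real algebraic integer such that |σ(a_p)| ≤ 2√p for every real embedding σ of ℚ(a_p). Then (p+1+a_p)(p+1−a_p) is a unit in the ring of all algebraic integers if and only if p = 2 and a_p² = 8. -/
/-!
Every embedding sends `u = (p + 1 + a)(p + 1 - a)` to the real number `(p + 1)² - σ(a)²`, which
the Hasse bound puts above `(p - 1)² ≥ 1`. The norm of `u` is the product of these numbers, so `u`
is a unit only if all of them equal `1`; this forces `(p - 1)² ≤ 1`, i.e. `p = 2`, and then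
`σ(a)² = 8`. Conversely `9 - 8 = 1`.
-/

open NumberField

namespace NumberField

variable {K : Type*} [Field K] [NumberField K]

theorem prod_norm_embeddings_eq_abs_norm (x : K) :
    ∏ σ : K →+* ℂ, ‖σ x‖ = |(Algebra.norm ℚ x : ℝ)| := by
  have h := congr_arg (‖·‖) (Algebra.norm_eq_prod_embeddings ℚ ℂ x)
  simp only [eq_ratCast, norm_prod] at h
  rw [Fintype.prod_equiv (RingHom.equivRatAlgHom K ℂ) (fun σ => ‖σ x‖) (fun φ => ‖φ x‖)
    fun _ => rfl, ← h, ← Complex.ofReal_ratCast, Complex.norm_real, Real.norm_eq_abs]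

theorem norm_embedding_eq_one_of_isUnit {x : 𝓞 K} (hx : IsUnit x)
    (h : ∀ σ : K →+* ℂ, 1 ≤ ‖σ x‖) (σ : K →+* ℂ) : ‖σ x‖ = 1 := by
  have hprod : ∏ σ : K →+* ℂ, ‖σ x‖₊ = 1 := by
    rw [← NNReal.coe_inj, NNReal.coe_prod]
    simp only [coe_nnnorm, prod_norm_embeddings_eq_abs_norm, ← RingOfIntegers.coe_norm]
    rw [← Rat.cast_abs, isUnit_iff_norm.mp hx, Rat.cast_one, NNReal.coe_one]
  have := (Finset.prod_eq_one_iff_of_one_le' fun σ _ => (mod_cast h σ : (1 : NNReal) ≤ ‖σ x‖₊)).mp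
    hprod σ (Finset.mem_univ σ)
  simpa using congrArg NNReal.toReal this

theorem eq_one_of_isUnit_of_embeddings_eq_ofReal {x : 𝓞 K} (hx : IsUnit x)
    {r : (K →+* ℂ) → ℝ} (hr : ∀ σ, σ x = r σ) (h : ∀ σ, 1 ≤ r σ) (σ : K →+* ℂ) : r σ = 1 := by
  have := norm_embedding_eq_one_of_isUnit hx (fun τ => by
    rw [hr, Complex.norm_real, Real.norm_eq_abs]
    exact (h τ).trans (le_abs_self _)) σ
  rwa [hr, Complex.norm_real, Real.norm_of_nonneg (zero_le_one.trans (h σ))] at this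

end NumberField

theorem sub_one_sq_le_add_one_sq_sub_sq {q t : ℝ} (hq : 0 ≤ q) (ht : |t| ≤ 2 * √q) :
    (q - 1) ^ 2 ≤ (q + 1) ^ 2 - t ^ 2 := by
  have : t ^ 2 ≤ 4 * q :=
    calc t ^ 2 = |t| ^ 2 := (sq_abs t).symm
      _ ≤ (2 * √q) ^ 2 := by gcongr
      _ = 4 * q := by rw [mul_pow, Real.sq_sqrt hq]; norm_num
  linarith

theorem stmt_2 (p : ℕ) (hp : p.Prime) (K : Type*) [Field K] [NumberField K]
    (a : 𝓞 K)
    (hreal : ∀ σ : K →+* ℂ, (σ (a : K)).im = 0)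
    (hbound : ∀ σ : K →+* ℂ, ‖σ (a : K)‖ ≤ 2 * Real.sqrt p) :
    IsUnit (((p : 𝓞 K) + 1 + a) * ((p : 𝓞 K) + 1 - a)) ↔ p = 2 ∧ a ^ 2 = 8 := by
  choose t ht using fun σ : K →+* ℂ =>
    (⟨(σ a).re, Complex.ext rfl (by simp [hreal σ])⟩ : ∃ t : ℝ, σ (a : K) = t)
  have hσu : ∀ σ : K →+* ℂ, σ ((((p : 𝓞 K) + 1 + a) * ((p : 𝓞 K) + 1 - a) : 𝓞 K) : K) =
      (((p + 1) ^ 2 - t σ ^ 2 : ℝ) : ℂ) := fun σ => by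
    push_cast [map_mul, map_add, map_sub, map_natCast, map_one, ht σ]
    ring
  have hlower : ∀ σ : K →+* ℂ, ((p : ℝ) - 1) ^ 2 ≤ (p + 1) ^ 2 - t σ ^ 2 := fun σ =>
    sub_one_sq_le_add_one_sq_sub_sq p.cast_nonneg (by simpa [ht σ] using hbound σ)
  have hp_one : (1 : ℝ) ≤ ((p : ℝ) - 1) ^ 2 := by
    have : (2 : ℝ) ≤ p := by exact_mod_cast hp.two_le
    nlinarith
  constructor
  · intro hunit
    have hσu_one := eq_one_of_isUnit_of_embeddings_eq_ofReal hunit hσu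
      fun σ => hp_one.trans (hlower σ)
    obtain ⟨σ⟩ : Nonempty (K →+* ℂ) := inferInstance
    have hp2 : p = 2 := by
      have : (p : ℝ) ≤ 2 := by nlinarith [hlower σ, hσu_one σ]
      exact le_antisymm (by exact_mod_cast this) hp.two_le
    subst hp2
    refine ⟨rfl, RingOfIntegers.coe_injective (σ.injective ?_)⟩
    have h := hσu_one σ
    norm_num at h
    push_cast [map_pow, map_ofNat, ht σ]
    exact_mod_cast (by linarith : t σ ^ 2 = 8)
  · rintro ⟨rfl, ha⟩
    convert isUnit_one
    push_cast
    linear_combination (-1 : 𝓞 K) * ha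
end

section
/- Let p be a prime with p > 2, and let a ∈ ℤ with |a| ≤ ⌊2√p⌋ (i.e. a² ≤ 4p). If both p+1−a and p+1+a are (up to sign) powers of p, then this is impossible; that is, (p+1−a)(p+1+a) is divisible by some prime ℓ ≠ p. -/
/-! Put `m = p + 1 - a` and `n = p + 1 + a`; the Hasse bound makes both nonnegative, and
`m + n = 2 (p + 1)`. If `m n` had no prime factor other than `p`, then `m = p ^ i` and
`n = p ^ j`. Since `p ∤ 2 (p + 1)`, one exponent vanishes, say `i = 0`; but then
`p ^ j = 2 p + 1 ≡ 1 (mod p)` forces `j = 0` as well, which is absurd. -/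

theorem Nat.Prime.pow_add_pow_ne_two_mul_succ {p : ℕ} (hp : p.Prime) (hp2 : 2 < p) (i j : ℕ) :
    p ^ i + p ^ j ≠ 2 * (p + 1) := by
  have not_dvd_two_mul_add_one : ¬ p ∣ 2 * p + 1 := fun h =>
    hp.not_dvd_one ((Nat.dvd_add_right (dvd_mul_left p 2)).mp h)
  intro h
  rcases i with _ | i <;> rcases j with _ | j <;> simp only [pow_zero, pow_succ'] at h
  · omega
  · exact not_dvd_two_mul_add_one ⟨p ^ j, by linarith⟩
  · exact not_dvd_two_mul_add_one ⟨p ^ i, by linarith⟩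
  · have hdvd : p ∣ 2 * p + 2 := ⟨p ^ i + p ^ j, by linarith⟩
    have hp_le_two := Nat.le_of_dvd two_pos ((Nat.dvd_add_right (dvd_mul_left p 2)).mp hdvd)
    omega

theorem Nat.Prime.exists_prime_ne_dvd_mul_of_add_eq {p : ℕ} (hp : p.Prime) (hp2 : 2 < p)
    {m n : ℕ} (hmn : m + n = 2 * (p + 1)) : ∃ ℓ : ℕ, ℓ.Prime ∧ ℓ ≠ p ∧ ℓ ∣ m * n := by
  by_cases hzero : m * n = 0
  · exact ⟨2, Nat.prime_two, hp2.ne, hzero ▸ dvd_zero 2⟩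
  by_contra! honly
  have hprime_dvd : ∀ {d : ℕ}, d.Prime → d ∣ m * n → d = p := fun hd hdvd => by
    by_contra hne
    exact honly _ hd hne hdvd
  obtain ⟨hm, hn⟩ := mul_ne_zero_iff.mp hzero
  rw [Nat.eq_prime_pow_of_unique_prime_dvd hm fun hd hdvd => hprime_dvd hd (hdvd.mul_right n),
    Nat.eq_prime_pow_of_unique_prime_dvd hn fun hd hdvd => hprime_dvd hd (hdvd.mul_left m)]
    at hmn
  exact hp.pow_add_pow_ne_two_mul_succ hp2 _ _ hmn

theorem stmt_6 (p : ℕ) (hp : p.Prime) (hp2 : 2 < p) (a : ℤ) (ha : a ^ 2 ≤ 4 * p) :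
    ∃ ℓ : ℕ, ℓ.Prime ∧ ℓ ≠ p ∧ (ℓ : ℤ) ∣ ((p : ℤ) + 1 - a) * ((p : ℤ) + 1 + a) := by
  have ha' : a ^ 2 ≤ ((p : ℤ) + 1) ^ 2 := by nlinarith [sq_nonneg ((p : ℤ) - 1)]
  obtain ⟨ha_lower, ha_upper⟩ := abs_le_of_sq_le_sq' ha' (by positivity)
  obtain ⟨m, hm⟩ := Int.eq_ofNat_of_zero_le (sub_nonneg.mpr ha_upper)
  obtain ⟨n, hn⟩ := Int.eq_ofNat_of_zero_le (show 0 ≤ (p : ℤ) + 1 + a by linarith)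
  have hmn : m + n = 2 * (p + 1) := by
    have : (m : ℤ) + n = 2 * (p + 1) := by rw [← hm, ← hn]; ring
    exact_mod_cast this
  obtain ⟨ℓ, hℓ, hℓp, hdvd⟩ := hp.exists_prime_ne_dvd_mul_of_add_eq hp2 hmn
  exact ⟨ℓ, hℓ, hℓp, by rw [hm, hn]; exact_mod_cast hdvd⟩
end

section
/- Fix an odd positive integer n. There exists a constant C_n such that for every prime p > C_n, there is exactly one power of p in the closed interval [(√p − 1)^{2n}, (√p + 1)^{2n}], namely p^n. -/
theorem stmt_9 (n : ℕ) (hodd : Odd n) (hpos : 0 < n) :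
    ∃ C : ℝ, ∀ p : ℕ, p.Prime → C < (p : ℝ) →
      ∀ k : ℕ,
        ((Real.sqrt p - 1) ^ (2 * n) ≤ (p : ℝ) ^ k ∧
            (p : ℝ) ^ k ≤ (Real.sqrt p + 1) ^ (2 * n)) ↔ k = n := by
  refine ⟨(4:ℝ)^n + 16, ?_⟩
  intro p hp hC k
  have h4n : (0:ℝ) < (4:ℝ)^n := by positivity
  have hp1 : (1:ℝ) ≤ (p:ℝ) := by exact_mod_cast hp.one_lt.le
  have h16 : (16:ℝ) ≤ (p:ℝ) := by linarith
  have h4np : (4:ℝ)^n < (p:ℝ) := by linarith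
  set s := Real.sqrt (p:ℝ) with hs
  have hp0 : (0:ℝ) ≤ (p:ℝ) := by linarith
  have hs2 : s^2 = (p:ℝ) := Real.sq_sqrt hp0
  have hs4 : (4:ℝ) ≤ s := by
    have h := Real.sqrt_le_sqrt h16
    rwa [show (16:ℝ) = 4^2 by norm_num, Real.sqrt_sq (by norm_num : (0:ℝ) ≤ 4)] at h
  have hsp : s ≤ (p:ℝ) := by nlinarith
  -- (s-1)^2 ≥ p/4
  have hlow : (p:ℝ)/4 ≤ (s-1)^2 := by nlinarith
  -- (s+1)^2 ≤ 4p
  have high : (s+1)^2 ≤ 4*(p:ℝ) := by nlinarith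
  -- (s-1)^2 ≤ p and p ≤ (s+1)^2
  have hmidl : (s-1)^2 ≤ (p:ℝ) := by nlinarith
  have hmidr : (p:ℝ) ≤ (s+1)^2 := by nlinarith
  have hpow_low : ((p:ℝ)/4)^n ≤ (s-1)^(2*n) := by
    rw [pow_mul]
    exact pow_le_pow_left₀ (by positivity) hlow n
  have hpow_high : (s+1)^(2*n) ≤ (4*(p:ℝ))^n := by
    rw [pow_mul]
    exact pow_le_pow_left₀ (by positivity) high n
  have hn1 : n - 1 + 1 = n := Nat.succ_pred_eq_of_pos hpos
  have hppow : (0:ℝ) < (p:ℝ)^(n-1) := by positivity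
  -- p^{n-1} < (s-1)^{2n}
  have key_low : (p:ℝ)^(n-1) < (s-1)^(2*n) := by
    refine lt_of_lt_of_le ?_ hpow_low
    rw [div_pow, lt_div_iff₀ (by positivity)]
    calc (p:ℝ)^(n-1) * 4^n < (p:ℝ)^(n-1) * (p:ℝ) := by
          exact mul_lt_mul_of_pos_left h4np hppow
      _ = (p:ℝ)^n := by rw [← pow_succ, hn1]
  -- (s+1)^{2n} < p^{n+1}
  have key_high : (s+1)^(2*n) < (p:ℝ)^(n+1) := by
    refine lt_of_le_of_lt hpow_high ?_
    rw [mul_pow, pow_succ]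
    calc (4:ℝ)^n * (p:ℝ)^n < (p:ℝ) * (p:ℝ)^n :=
          mul_lt_mul_of_pos_right h4np (by positivity)
      _ = (p:ℝ)^n * (p:ℝ) := mul_comm _ _
  constructor
  · rintro ⟨h1, h2⟩
    by_contra hne
    rcases lt_or_gt_of_ne hne with hlt | hgt
    · have hk : k ≤ n - 1 := Nat.le_pred_of_lt hlt
      have : (p:ℝ)^k ≤ (p:ℝ)^(n-1) := pow_le_pow_right₀ hp1 hk
      linarith
    · have hk : n + 1 ≤ k := hgt
      have : (p:ℝ)^(n+1) ≤ (p:ℝ)^k := pow_le_pow_right₀ hp1 hk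
      linarith
  · rintro rfl
    constructor
    · calc (s-1)^(2*k) = ((s-1)^2)^k := pow_mul _ _ _
        _ ≤ (p:ℝ)^k := pow_le_pow_left₀ (by positivity) hmidl k
    · calc (p:ℝ)^k ≤ ((s+1)^2)^k := pow_le_pow_left₀ hp0 hmidr k
        _ = (s+1)^(2*k) := (pow_mul _ _ _).symm
end

section
/- For an integer n with n ∉ {−1, 0, 1}, the cubic polynomial P_n(X) = X³ − 3(n+1)X + 2(n+1) is irreducible over ℚ. -/
open Polynomial

theorem stmt_12 (n : ℤ) (hn : n ≠ -1 ∧ n ≠ 0 ∧ n ≠ 1) :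
    Irreducible (X ^ 3 - C (3 * ((n : ℚ) + 1)) * X + C (2 * ((n : ℚ) + 1))) := by
  obtain ⟨h1, h0, h2⟩ := hn
  set p : ℚ[X] := X ^ 3 - C (3 * ((n : ℚ) + 1)) * X + C (2 * ((n : ℚ) + 1)) with hp
  have hmonic : p.Monic := by unfold p; monicity!
  have hdeg : p.natDegree = 3 := by unfold p; compute_degree!
  rw [hmonic.irreducible_iff_roots_eq_zero_of_degree_le_three (by omega) (by omega)]
  rw [Multiset.eq_zero_iff_forall_notMem]
  intro q hq
  rw [mem_roots hmonic.ne_zero, IsRoot] at hq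
  -- q is an integer by the integral root theorem
  set Pz : ℤ[X] := X ^ 3 - C (3 * (n + 1)) * X + C (2 * (n + 1)) with hPz
  have hPzm : Pz.Monic := by unfold Pz; monicity!
  have haev : aeval q Pz = 0 := by
    have hq' : eval q p = 0 := hq
    simp only [hp, eval_add, eval_sub, eval_mul, eval_pow, eval_X, eval_C] at hq'
    simp only [hPz, map_add, map_sub, map_mul, map_pow, aeval_X, aeval_C,
      algebraMap_int_eq, eq_intCast, map_ofNat, map_one, map_intCast]
    linear_combination hq' 
  obtain ⟨a, ha⟩ := isInteger_of_is_root_of_monic hPzm haev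
  have ha' : (a : ℚ) = q := ha
  -- integer equation
  have heq : a ^ 3 - 3 * (n + 1) * a + 2 * (n + 1) = 0 := by
    have h := haev
    rw [← ha'] at h
    simp only [hPz, map_add, map_sub, map_mul, map_pow, aeval_X, aeval_C,
      algebraMap_int_eq, eq_intCast, map_ofNat, map_one, map_intCast] at h
    have h2 : ((a ^ 3 - 3 * (n + 1) * a + 2 * (n + 1) : ℤ) : ℚ) = 0 := by
      push_cast
      linear_combination h
    exact_mod_cast h2
  have hd : (3 * a - 2) ∣ 8 := by
    have h1 : (3 * a - 2) ∣ a ^ 3 := ⟨n + 1, by linarith⟩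
    have h2 : (3 * a - 2) ∣ (3 * a - 2) * (9 * a ^ 2 + 6 * a + 4) := Dvd.intro _ rfl
    have h3 : (3 * a - 2) ∣ 27 * a ^ 3 := h1.mul_left 27
    have : (8 : ℤ) = 27 * a ^ 3 - (3 * a - 2) * (9 * a ^ 2 + 6 * a + 4) := by ring
    rw [this]
    exact dvd_sub h3 h2
  have hb1 : 3 * a - 2 ≤ 8 := Int.le_of_dvd (by norm_num) hd
  have hb2 : -(3 * a - 2) ≤ 8 := Int.le_of_dvd (by norm_num) ((neg_dvd).mpr hd)
  have hal : -2 ≤ a := by omega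
  have hau : a ≤ 3 := by omega
  clear hd hb1 hb2 haev ha ha' hq
  interval_cases a <;> (norm_num at heq; omega)
end

section
/- Let n be an integer with n ∉ {−1, 0, 1} such that 3n is not a perfect square. Then the Galois group of the splitting field of P_n(X) = X³ − 3(n+1)X + 2(n+1) over ℚ is isomorphic to S₃. -/
/-!
`P_n` has no rational root, since such a root would be an integer `m` with
`3 * m - 2 ∣ 8`; being a cubic, `P_n` is therefore irreducible, so `3` divides the order of
its Galois group. The discriminant `108 * n * (n + 1) ^ 2` is a square in the splitting field but
not in `ℚ`, so the splitting field contains a quadratic subfield and `2` divides the order too.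
As the Galois group acts faithfully on the three roots, its order is `6` and it is all of `S₃`.
-/

open Polynomial

theorem exists_sq_eq_discr_X_pow_three_sub_C_mul_X_add_C {F : Type*} [Field F] (a b : F) :
    ∃ δ : (X ^ 3 - C a * X + C b).SplittingField,
      δ ^ 2 = algebraMap F _ (4 * a ^ 3 - 27 * b ^ 2) := by
  let P : Cubic F := ⟨1, 0, -a, b⟩
  have hP : P.toPoly = X ^ 3 - C a * X + C b := by simp [P, Cubic.toPoly, sub_eq_add_neg]
  have hsplits : (P.toPoly.map (algebraMap F (X ^ 3 - C a * X + C b).SplittingField)).Splits := by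
    rw [hP]
    exact SplittingField.splits _
  obtain ⟨x, y, z, hroots⟩ := (Cubic.splits_iff_roots_eq_three one_ne_zero).mp hsplits
  refine ⟨(x - y) * (x - z) * (y - z), ?_⟩
  have hdiscr : P.discr = 4 * a ^ 3 - 27 * b ^ 2 := by
    simp only [Cubic.discr, P]
    ring
  rw [← hdiscr, Cubic.discr_eq_prod_three_roots one_ne_zero hroots, map_one, one_mul, one_mul]

theorem two_dvd_finrank_of_sq_eq_algebraMap {F K : Type*} [Field F] [Field K] [Algebra F K]
    {δ : K} {c : F} (hδ : δ ^ 2 = algebraMap F K c) (hc : ¬ IsSquare c) :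
    2 ∣ Module.finrank F K := by
  have hirr : Irreducible (X ^ 2 - C c) :=
    X_pow_sub_C_irreducible_of_prime Nat.prime_two fun b hb ↦ hc ⟨b, by rw [← hb, sq]⟩
  have hroot : aeval δ (X ^ 2 - C c) = 0 := by simp [hδ]
  have hmin : minpoly F δ = X ^ 2 - C c :=
    (minpoly.eq_of_irreducible_of_monic hirr hroot (monic_X_pow_sub_C c two_ne_zero)).symm
  have hint : IsIntegral F δ := ⟨_, monic_X_pow_sub_C c two_ne_zero, hroot⟩
  simpa [hmin, natDegree_X_pow_sub_C] using minpoly.degree_dvd hint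

namespace Polynomial.Gal

variable {F : Type*} [Field F] {p : F[X]}

theorem nonempty_mulEquiv_perm_of_factorial_dvd_card (hsep : p.Separable)
    (hcard : p.natDegree.factorial ∣ Nat.card p.Gal) :
    Nonempty (p.Gal ≃* Equiv.Perm (Fin p.natDegree)) := by
  have : Fact (p.map (algebraMap F p.SplittingField)).Splits := ⟨SplittingField.splits p⟩
  let roots : p.rootSet p.SplittingField ≃ Fin p.natDegree :=
    Fintype.equivFinOfCardEq (card_rootSet_eq_natDegree hsep (SplittingField.splits p))
  have hbij : Function.Bijective (galActionHom p p.SplittingField) := by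
    refine (galActionHom_injective p p.SplittingField).bijective_of_nat_card_le ?_
    rw [Nat.card_perm, Nat.card_congr roots, Nat.card_fin]
    exact Nat.le_of_dvd Nat.card_pos hcard
  exact ⟨(MulEquiv.ofBijective _ hbij).trans roots.permCongrHom⟩

theorem nonempty_mulEquiv_perm_three [CharZero F] (hirr : Irreducible p) (hdeg : p.natDegree = 3)
    (h2 : 2 ∣ Module.finrank F p.SplittingField) :
    Nonempty (p.Gal ≃* Equiv.Perm (Fin 3)) := by
  have h3 : 3 ∣ Nat.card p.Gal := hdeg ▸ prime_degree_dvd_card hirr (hdeg ▸ Nat.prime_three)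
  rw [← card_of_separable hirr.separable] at h2
  have h6 : p.natDegree.factorial ∣ Nat.card p.Gal := by
    rw [hdeg, show Nat.factorial 3 = 2 * 3 from rfl]
    exact Nat.Coprime.mul_dvd_of_dvd_of_dvd (by norm_num) h2 h3
  exact hdeg ▸ nonempty_mulEquiv_perm_of_factorial_dvd_card hirr.separable h6

end Polynomial.Gal

theorem eq_neg_one_or_eq_zero_or_eq_one_of_cubic_eq_zero {n m : ℤ}
    (h : m ^ 3 - 3 * (n + 1) * m + 2 * (n + 1) = 0) : n = -1 ∨ n = 0 ∨ n = 1 := by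
  -- `m ^ 3 = (3 * m - 2) * (n + 1)`, and `3 * m - 2 ∣ (3 * m) ^ 3 - 8`
  have hdvd : 3 * m - 2 ∣ 8 := by
    have h27 : 3 * m - 2 ∣ 27 * m ^ 3 := Dvd.dvd.mul_left ⟨n + 1, by linear_combination h⟩ 27
    have hcube : 3 * m - 2 ∣ 27 * m ^ 3 - 8 := ⟨9 * m ^ 2 + 6 * m + 4, by ring⟩
    simpa using dvd_sub h27 hcube
  have hm₁ : -2 ≤ m := by linarith [Int.le_of_dvd (by norm_num) hdvd.neg_left]
  have hm₂ : m ≤ 3 := by linarith [Int.le_of_dvd (by norm_num) hdvd]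
  clear hdvd
  interval_cases m <;> omega

theorem irreducible_X_pow_three_sub_C_three_mul_X_add_C_two_mul {n : ℤ}
    (hn : n ≠ -1 ∧ n ≠ 0 ∧ n ≠ 1) :
    Irreducible (X ^ 3 - C (3 * ((n : ℚ) + 1)) * X + C (2 * ((n : ℚ) + 1))) := by
  have hdeg : (X ^ 3 - C (3 * ((n : ℚ) + 1)) * X + C (2 * ((n : ℚ) + 1))).natDegree = 3 := by
    compute_degree!
  rw [irreducible_iff_roots_eq_zero_of_degree_le_three (by omega) (by omega),
    Multiset.eq_zero_iff_forall_notMem]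
  intro q hqroot
  have hq : q ^ 3 - 3 * (n + 1) * q + 2 * (n + 1) = 0 := by
    simpa using (mem_roots (ne_zero_of_natDegree_gt (hdeg ▸ three_pos))).mp hqroot
  have hmonic : (X ^ 3 - C (3 * (n + 1)) * X + C (2 * (n + 1)) : ℤ[X]).Monic := by monicity!
  obtain ⟨m, rfl⟩ := isInteger_of_is_root_of_monic hmonic (r := q) (by
    simpa only [map_add, map_sub, map_mul, map_pow, aeval_X, aeval_C, map_ofNat, map_one,
      map_intCast, algebraMap_int_eq, eq_intCast] using hq)
  have hm : m ^ 3 - 3 * (n + 1) * m + 2 * (n + 1) = 0 := by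
    rw [algebraMap_int_eq, eq_intCast] at hq
    exact_mod_cast hq
  have := eq_neg_one_or_eq_zero_or_eq_one_of_cubic_eq_zero hm
  tauto

theorem not_isSquare_discr {n : ℤ} (hn : n ≠ -1) (hsq : ¬ ∃ m : ℤ, 3 * n = m ^ 2) :
    ¬ IsSquare (4 * (3 * ((n : ℚ) + 1)) ^ 3 - 27 * (2 * ((n : ℚ) + 1)) ^ 2) := by
  rintro ⟨q, hq⟩
  have hn1 : (n : ℚ) + 1 ≠ 0 := by exact_mod_cast (by omega : n + 1 ≠ 0)
  -- the discriminant is `(6 * (n + 1)) ^ 2 * (3 * n)`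
  have h3n : IsSquare ((3 * n : ℤ) : ℚ) := ⟨q / (6 * (n + 1)), by
    field_simp
    push_cast
    linear_combination hq⟩
  obtain ⟨m, hm⟩ := Rat.isSquare_intCast_iff.mp h3n
  exact hsq ⟨m, by rw [hm, sq]⟩

theorem stmt_13 (n : ℤ) (hn : n ≠ -1 ∧ n ≠ 0 ∧ n ≠ 1)
    (hsq : ¬ ∃ m : ℤ, 3 * n = m ^ 2) :
    Nonempty
      ((X ^ 3 - C (3 * ((n : ℚ) + 1)) * X + C (2 * ((n : ℚ) + 1))).Gal ≃*
        Equiv.Perm (Fin 3)) := by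
  obtain ⟨δ, hδ⟩ := exists_sq_eq_discr_X_pow_three_sub_C_mul_X_add_C
    (3 * ((n : ℚ) + 1)) (2 * ((n : ℚ) + 1))
  exact Gal.nonempty_mulEquiv_perm_three
    (irreducible_X_pow_three_sub_C_three_mul_X_add_C_two_mul hn) (by compute_degree!)
    (two_dvd_finrank_of_sq_eq_algebraMap hδ (not_isSquare_discr hn.1 hsq))
end
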